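/- arXiv:2208.01175 — 4 statements merged into one kernel-verified Lean document; each statement's English description precedes it below -/
import Mathlib

section
/- Let T_n be the Fibonacci polynomials (T_0 = 0, T_1 = 1, T_{n+1} = z·T_n + T_{n-1}) and define a sequence p_n in the field ℚ(a, z) by p_0 = 1, p_1 = (z + z^{-1})·a^{-1} − z^{-1}·a^{-3}, and p_n = (z/a)·p_{n-1} + a^{-2}·p_{n-2} for n ≥ 2. Then for all n ≥ 0, p_n = a^{-n}·( T_{n+1}(z) + z^{-1}·(1 − a^{-2})·T_n(z) ). -/
open Polynomial

/-- The Fibonacci polynomials: `T 0 = 0`, `T 1 = 1`, `T (n+2) = z·T (n+1) + T n`. -/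
noncomputable def fibPoly : ℕ → Polynomial ℤ
  | 0 => 0
  | 1 => 1
  | (n + 2) => X * fibPoly (n + 1) + fibPoly n

/-- The field ℚ(a, z) of rational functions in two variables. -/
noncomputable abbrev F2 : Type := RatFunc (RatFunc ℚ)

/-- The variable `a` of ℚ(a, z). -/
noncomputable def aVar : F2 := RatFunc.X

/-- The variable `z` of ℚ(a, z). -/
noncomputable def zVar : F2 := RatFunc.C RatFunc.X

/-!
Both sides satisfy the same second-order linear recurrence: for any `a`, `z`, `c`, the sequence
`a⁻ⁿ (T_{n+1}(z) + c T_n(z))` satisfies `q (n+2) = (z/a) q (n+1) + a⁻² q n`, because `a⁻ⁿ T_n(z)`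
does. With `c = z⁻¹ (1 - a⁻²)` its first two terms are `p 0` and `p 1`, so it is `p`.
-/

theorem Nat.eq_of_recurrence_two {R : Type*} [Semiring R] {u v : ℕ → R} (α β : R)
    (hu : ∀ n, u (n + 2) = α * u (n + 1) + β * u n)
    (hv : ∀ n, v (n + 2) = α * v (n + 1) + β * v n)
    (h0 : u 0 = v 0) (h1 : u 1 = v 1) : u = v := by
  funext n
  induction n using Nat.twoStepInduction with
  | zero => exact h0
  | one => exact h1
  | more n ih₀ ih₁ => rw [hu, hv, ih₀, ih₁]

@[simp]
theorem aeval_fibPoly_zero {A : Type*} [Ring A] [Algebra ℤ A] (x : A) :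
    aeval x (fibPoly 0) = 0 := by
  simp [fibPoly]

@[simp]
theorem aeval_fibPoly_one {A : Type*} [Ring A] [Algebra ℤ A] (x : A) :
    aeval x (fibPoly 1) = 1 := by
  simp [fibPoly]

theorem aeval_fibPoly_add_two {A : Type*} [Ring A] [Algebra ℤ A] (x : A) (n : ℕ) :
    aeval x (fibPoly (n + 2)) = x * aeval x (fibPoly (n + 1)) + aeval x (fibPoly n) := by
  simp [fibPoly]

section ClosedForm

-- `Algebra ℤ K` is a parameter because the instance `aeval` finds on `F2` is not reducibly
-- defeq to `algebraInt`.
variable {K : Type*} [Field K] [Algebra ℤ K]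

noncomputable def fibClosedForm (a z c : K) (n : ℕ) : K :=
  a⁻¹ ^ n * (aeval z (fibPoly (n + 1)) + c * aeval z (fibPoly n))

theorem fibClosedForm_zero (a z c : K) : fibClosedForm a z c 0 = 1 := by
  simp [fibClosedForm]

theorem fibClosedForm_one (a z c : K) : fibClosedForm a z c 1 = a⁻¹ * (z + c) := by
  simp [fibClosedForm, aeval_fibPoly_add_two]

theorem fibClosedForm_add_two (a z c : K) (n : ℕ) :
    fibClosedForm a z c (n + 2) =
      z / a * fibClosedForm a z c (n + 1) + a⁻¹ ^ 2 * fibClosedForm a z c n := by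
  simp only [fibClosedForm, aeval_fibPoly_add_two, div_eq_mul_inv]
  ring

end ClosedForm

theorem homfly_An_closed_form (p : ℕ → F2)
    (h0 : p 0 = 1)
    (h1 : p 1 = (zVar + zVar⁻¹) * aVar⁻¹ - zVar⁻¹ * aVar⁻¹ ^ 3)
    (hrec : ∀ n : ℕ, 2 ≤ n → p n = (zVar / aVar) * p (n - 1) + aVar⁻¹ ^ 2 * p (n - 2)) :
    ∀ n : ℕ, p n = aVar⁻¹ ^ n *
      (Polynomial.aeval zVar (fibPoly (n + 1)) +
        zVar⁻¹ * (1 - aVar⁻¹ ^ 2) * Polynomial.aeval zVar (fibPoly n)) := by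
  have hp : p = fibClosedForm aVar zVar (zVar⁻¹ * (1 - aVar⁻¹ ^ 2)) := by
    refine Nat.eq_of_recurrence_two (zVar / aVar) (aVar⁻¹ ^ 2) (fun n => ?_)
      (fibClosedForm_add_two _ _ _) ?_ ?_
    · simpa using hrec (n + 2) (by omega)
    · rw [h0, fibClosedForm_zero]
    · rw [h1, fibClosedForm_one]
      ring
  exact fun n => congrFun hp n
end

section
/- Define a sequence r_n in ℚ(q) by r_2 = ((q² − q + 1)/(q − 1))², r_3 = (q⁴ − q³ + q² − q + 1)/(q − 1), and r_n = (q − 1)·r_{n−1} + q·r_{n−2} for n ≥ 4. Then for all even n ≥ 2, r_n = (q^{n+3} + 1)/((q + 1)(q − 1)²) + (q − q^n)/(q − 1), and for all odd n ≥ 3, r_n = (q^{n+3} − 1)/((q² − 1)(q − 1)) − (q + q^n)/(q − 1). -/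
/-!
The recurrence `r n = (q - 1) r (n - 1) + q r (n - 2)` has characteristic polynomial
`(t - q) (t + 1)`, so for `n ≥ 2` its solutions are `α q ^ n + β (-1) ^ n`; fitting `r 2` and `r 3`
gives `α = (q³ - q² + 1) / ((q + 1)(q - 1)²)` and `β = (q³ - q + 1) / ((q + 1)(q - 1)²)`, and
evaluating `(-1) ^ n` according to the parity of `n` gives the two formulas.
-/

namespace LinearRecurrence

variable {R : Type*} [CommSemiring R] (E : LinearRecurrence R)

theorem IsSolution.comp_add_const {u : ℕ → R} (hu : E.IsSolution u) (k : ℕ) :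
    E.IsSolution fun n => u (n + k) := fun n => by
  simpa only [add_right_comm] using hu (n + k)

end LinearRecurrence

namespace DnLeaf

variable {F : Type*}

def leafRecurrence [CommRing F] (q : F) : LinearRecurrence F := ⟨2, ![q, q - 1]⟩

theorem leafRecurrence_isSolution_iff [CommRing F] (q : F) (u : ℕ → F) :
    (leafRecurrence q).IsSolution u ↔ ∀ n, u (n + 2) = (q - 1) * u (n + 1) + q * u n := by
  change (∀ n, u (n + 2) = ∑ i : Fin 2, ![q, q - 1] i * u (n + i)) ↔ _
  simp only [Fin.sum_univ_two, Matrix.cons_val_zero, Matrix.cons_val_one, Fin.val_zero,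
    Fin.val_one, add_zero, add_comm (q * _)]

theorem leafRecurrence_isSolution_geom [CommRing F] (q α β : F) :
    (leafRecurrence q).IsSolution fun n => α * q ^ n + β * (-1) ^ n := by
  rw [leafRecurrence_isSolution_iff]
  intro n
  ring

def closedForm [Field F] (q : F) (n : ℕ) : F :=
  ((q ^ 3 - q ^ 2 + 1) * q ^ n + (q ^ 3 - q + 1) * (-1) ^ n) / ((q + 1) * (q - 1) ^ 2)

theorem leafRecurrence_isSolution_closedForm [Field F] (q : F) :
    (leafRecurrence q).IsSolution (closedForm q) := by
  have := leafRecurrence_isSolution_geom q ((q ^ 3 - q ^ 2 + 1) / ((q + 1) * (q - 1) ^ 2))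
    ((q ^ 3 - q + 1) / ((q + 1) * (q - 1) ^ 2))
  convert this using 2 with n
  rw [closedForm]
  ring

variable [Field F] {q : F}

theorem eq_closedForm (hq₁ : q - 1 ≠ 0) (hq₂ : q + 1 ≠ 0) (r : ℕ → F)
    (h2 : r 2 = ((q ^ 2 - q + 1) / (q - 1)) ^ 2)
    (h3 : r 3 = (q ^ 4 - q ^ 3 + q ^ 2 - q + 1) / (q - 1))
    (hrec : ∀ n, 4 ≤ n → r n = (q - 1) * r (n - 1) + q * r (n - 2)) :
    ∀ n, 2 ≤ n → r n = closedForm q n := by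
  have hr : (leafRecurrence q).IsSolution fun n => r (n + 2) :=
    (leafRecurrence_isSolution_iff q _).2 fun n => hrec (n + 4) (by omega)
  have hinit : Set.EqOn (fun n => r (n + 2)) (fun n => closedForm q (n + 2))
      ↑(Finset.range 2) := by
    intro n hn
    obtain rfl | rfl : n = 0 ∨ n = 1 := by simp at hn; omega
    · simp only [h2, closedForm]; field_simp; ring
    · simp only [h3, closedForm]; field_simp; ring
  have := ((leafRecurrence q).eq_iff_eqOn_range_order _ _ hr
    ((leafRecurrence_isSolution_closedForm q).comp_add_const _ 2)).2 hinit
  intro n hn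
  obtain ⟨m, rfl⟩ : ∃ m, n = m + 2 := ⟨n - 2, by omega⟩
  exact congrFun this m

theorem closedForm_of_even (hq₁ : q - 1 ≠ 0) (hq₂ : q + 1 ≠ 0) {n : ℕ} (hn : Even n) :
    closedForm q n = (q ^ (n + 3) + 1) / ((q + 1) * (q - 1) ^ 2) + (q - q ^ n) / (q - 1) := by
  rw [closedForm, hn.neg_one_pow]
  field_simp
  ring

theorem closedForm_of_odd (hq₁ : q - 1 ≠ 0) (hq₂ : q + 1 ≠ 0) {n : ℕ} (hn : Odd n) :
    closedForm q n = (q ^ (n + 3) - 1) / ((q ^ 2 - 1) * (q - 1)) - (q + q ^ n) / (q - 1) := by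
  have hq : q ^ 2 - 1 = (q + 1) * (q - 1) := by ring
  rw [closedForm, hn.neg_one_pow, hq]
  field_simp
  ring

end DnLeaf

namespace RatFunc

variable {K : Type*} [Field K]

theorem X_sub_C_ne_zero (c : K) : (X : RatFunc K) - C c ≠ 0 := by
  rw [← algebraMap_X, ← algebraMap_C, ← map_sub]
  exact algebraMap_ne_zero (Polynomial.X_sub_C_ne_zero c)

end RatFunc

theorem pointCount_Dn_closed_form (r : ℕ → RatFunc ℚ)
    (h2 : r 2 = (((RatFunc.X : RatFunc ℚ) ^ 2 - RatFunc.X + 1) / (RatFunc.X - 1)) ^ 2)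
    (h3 : r 3 = ((RatFunc.X : RatFunc ℚ) ^ 4 - RatFunc.X ^ 3 + RatFunc.X ^ 2 - RatFunc.X + 1) /
      (RatFunc.X - 1))
    (hrec : ∀ n : ℕ, 4 ≤ n →
      r n = ((RatFunc.X : RatFunc ℚ) - 1) * r (n - 1) + RatFunc.X * r (n - 2)) :
    (∀ n : ℕ, 2 ≤ n → Even n →
      r n = ((RatFunc.X : RatFunc ℚ) ^ (n + 3) + 1) /
          ((RatFunc.X + 1) * (RatFunc.X - 1) ^ 2) +
        ((RatFunc.X : RatFunc ℚ) - RatFunc.X ^ n) / (RatFunc.X - 1)) ∧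
    (∀ n : ℕ, 3 ≤ n → Odd n →
      r n = ((RatFunc.X : RatFunc ℚ) ^ (n + 3) - 1) /
          (((RatFunc.X : RatFunc ℚ) ^ 2 - 1) * (RatFunc.X - 1)) -
        ((RatFunc.X : RatFunc ℚ) + RatFunc.X ^ n) / (RatFunc.X - 1)) := by
  have hX₁ : (RatFunc.X : RatFunc ℚ) - 1 ≠ 0 := by
    simpa using RatFunc.X_sub_C_ne_zero (1 : ℚ)
  have hX₂ : (RatFunc.X : RatFunc ℚ) + 1 ≠ 0 := by
    simpa using RatFunc.X_sub_C_ne_zero (-1 : ℚ)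
  have hr := DnLeaf.eq_closedForm hX₁ hX₂ r h2 h3 hrec
  exact ⟨fun n hn he => (hr n hn).trans (DnLeaf.closedForm_of_even hX₁ hX₂ he),
    fun n hn ho => (hr n (by omega)).trans (DnLeaf.closedForm_of_odd hX₁ hX₂ ho)⟩
end

section
/- For every n ≥ 0, the identity Σ_{k=0}^{⌊(n+1)/2⌋} C(n + 1 − k, k) · (q − 1)^{n − 2k} · q^k = (q^{n+2} − (−1)^n)/(q² − 1) holds in the field of rational functions ℚ(q). -/
/-! The sum is a Fibonacci polynomial: with `a = q - 1` and `b = q` its terms satisfy Pascal's rule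
in the form `S (n + 2) = a * S (n + 1) + b * S n`. The characteristic polynomial `t² - a t - b` has
roots `q` and `-1`, so Binet's formula gives `(q² - 1) S n = q ^ (n + 2) - (-1) ^ (n + 2)`. -/

open Finset

theorem Nat.choose_sub_succ_succ (n k : ℕ) :
    (n + 2 - k).choose (k + 1) = (n + 1 - k).choose k + (n + 1 - k).choose (k + 1) := by
  rcases le_or_gt k (n + 1) with hk | hk
  · rw [show n + 2 - k = n + 1 - k + 1 by omega, Nat.choose_succ_succ]
  · simp [Nat.choose_eq_zero_of_lt, show n + 2 - k = 0 by omega, show n + 1 - k = 0 by omega,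
      show 0 < k by omega]

section IndepSetSum

variable {K : Type*} [Field K] (a b : K)

/-- `(n + 1 - k).choose k` counts the `k`-element independent sets of the path on `n` vertices. -/
noncomputable def indepSetTerm (n k : ℕ) : K :=
  ((n + 1 - k).choose k : K) * a ^ ((n : ℤ) - 2 * k) * b ^ k

noncomputable def indepSetSum (n : ℕ) : K :=
  ∑ k ∈ range ((n + 1) / 2 + 1), indepSetTerm a b n k

variable {a b}

theorem indepSetTerm_zero_right (n : ℕ) : indepSetTerm a b n 0 = a ^ n := by
  simp [indepSetTerm]

theorem indepSetTerm_eq_zero {n k : ℕ} (hk : (n + 1) / 2 < k) : indepSetTerm a b n k = 0 := by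
  simp [indepSetTerm, Nat.choose_eq_zero_of_lt (show n + 1 - k < k by omega)]

theorem sum_range_indepSetTerm {n m : ℕ} (hm : (n + 1) / 2 < m) :
    ∑ k ∈ range m, indepSetTerm a b n k = indepSetSum a b n :=
  eventually_constant_sum (fun _ hk => indepSetTerm_eq_zero hk) hm

theorem indepSetTerm_succ_succ (ha : a ≠ 0) (n k : ℕ) :
    indepSetTerm a b (n + 2) (k + 1) =
      a * indepSetTerm a b (n + 1) (k + 1) + b * indepSetTerm a b n k := by
  have hexp₂ : ((n + 2 : ℕ) : ℤ) - 2 * (k + 1 : ℕ) = n - 2 * k := by push_cast; ring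
  have hexp₁ : a ^ (((n + 1 : ℕ) : ℤ) - 2 * (k + 1 : ℕ)) = a ^ ((n : ℤ) - 2 * k) / a := by
    rw [div_eq_mul_inv, ← zpow_sub_one₀ ha]; push_cast; ring_nf
  unfold indepSetTerm
  simp only [Nat.add_sub_add_right, Nat.choose_sub_succ_succ, hexp₂, hexp₁]
  field_simp
  push_cast
  ring

theorem indepSetSum_zero : indepSetSum a b 0 = 1 := by
  simp [indepSetSum, indepSetTerm]

theorem indepSetSum_one : indepSetSum a b 1 = a + b / a := by
  simp [indepSetSum, indepSetTerm, sum_range_succ, div_eq_inv_mul]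

theorem indepSetSum_add_two (ha : a ≠ 0) (n : ℕ) :
    indepSetSum a b (n + 2) = a * indepSetSum a b (n + 1) + b * indepSetSum a b n := by
  rw [← sum_range_indepSetTerm (m := n + 3) (by omega),
    ← sum_range_indepSetTerm (n := n + 1) (m := n + 3) (by omega),
    ← sum_range_indepSetTerm (n := n) (m := n + 2) (by omega),
    sum_range_succ', sum_range_succ' _ (n + 2)]
  simp only [indepSetTerm_succ_succ ha, indepSetTerm_zero_right, sum_add_distrib, ← mul_sum]
  ring

/-- Binet's formula, for the roots `r` and `s` of `t² - (r + s) t + r s`. -/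
theorem indepSetSum_binet (r s : K) (hrs : r + s ≠ 0) (n : ℕ) :
    (r - s) * (r + s) * indepSetSum (r + s) (-(r * s)) n = r ^ (n + 2) - s ^ (n + 2) := by
  induction n using Nat.twoStepInduction with
  | zero => rw [indepSetSum_zero]; ring
  | one => rw [indepSetSum_one]; field_simp; ring
  | more n ih₀ ih₁ =>
    rw [indepSetSum_add_two hrs]
    linear_combination (r + s) * ih₁ - r * s * ih₀

end IndepSetSum

theorem RatFunc.X_pow_sub_one_ne_zero {K : Type*} [Field K] {n : ℕ} (hn : 0 < n) :
    (RatFunc.X : RatFunc K) ^ n - 1 ≠ 0 := by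
  simpa [RatFunc.algebraMap_X] using
    RatFunc.algebraMap_ne_zero (Polynomial.X_pow_sub_C_ne_zero hn (1 : K))

theorem pathGraph_pointCount_closed_form (n : ℕ) :
    ∑ k ∈ Finset.range ((n + 1) / 2 + 1),
        ((n + 1 - k).choose k : RatFunc ℚ) *
          ((RatFunc.X : RatFunc ℚ) - 1) ^ ((n : ℤ) - 2 * k) *
          (RatFunc.X : RatFunc ℚ) ^ k =
      ((RatFunc.X : RatFunc ℚ) ^ (n + 2) - (-1) ^ n) / ((RatFunc.X : RatFunc ℚ) ^ 2 - 1) := by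
  set q : RatFunc ℚ := RatFunc.X
  have hq₁ : q + -1 ≠ 0 := by simpa [← sub_eq_add_neg] using RatFunc.X_pow_sub_one_ne_zero one_pos
  have hbinet := indepSetSum_binet q (-1) hq₁ n
  rw [eq_div_iff (RatFunc.X_pow_sub_one_ne_zero two_pos)]
  simp only [indepSetSum, indepSetTerm, mul_neg_one, neg_neg, ← sub_eq_add_neg] at hbinet
  linear_combination hbinet
end

section
/- For a finite simple graph G with n vertices, define the weighted independent set invariant I(G) = Σ_k a_k(G) · (q − 1)^{n − 2k} · q^k in ℚ(q), where a_k(G) is the number of k-element independent sets of G. If v is a leaf vertex of G (a vertex of degree exactly 1) with unique neighbor u, then I(G) = (q − 1)·I(G − {v}) + q·I(G − {u, v}). -/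
/-!
Split the independent sets `s` of `G` according to whether they contain the leaf `v`.
Those avoiding `v` are exactly the independent sets of `G - v`, and dropping one vertex from
the graph divides the weight by `q - 1`. Those containing `v` cannot contain `u`, so
`s ↦ s \ {v}` matches them with the independent sets of `G - {u, v}`; dropping two vertices
from the graph and one from `s` divides the weight by `q`.
-/

open scoped Classical

/-- The weighted independent-set invariant
`I(G) = Σ_s (q − 1)^(n − 2|s|) · q^|s|` in ℚ(q), where the sum is over
independent sets `s` of `G` and `n = |V|`. -/
noncomputable def indepPoly {V : Type*} [Fintype V] (G : SimpleGraph V) : RatFunc ℚ :=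
  ∑ s ∈ Finset.univ.filter (fun s : Finset V => ∀ i ∈ s, ∀ j ∈ s, ¬ G.Adj i j),
    ((RatFunc.X : RatFunc ℚ) - 1) ^ ((Fintype.card V : ℤ) - 2 * s.card) *
      (RatFunc.X : RatFunc ℚ) ^ s.card

open Finset

lemma RatFunc.X_sub_one_ne_zero {K : Type*} [Field K] : (RatFunc.X : RatFunc K) - 1 ≠ 0 := by
  simpa [← RatFunc.algebraMap_X] using
    RatFunc.algebraMap_ne_zero (Polynomial.X_sub_C_ne_zero (1 : K))

noncomputable def indepWeight (n : ℤ) (k : ℕ) : RatFunc ℚ :=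
  (RatFunc.X - 1) ^ (n - 2 * k) * RatFunc.X ^ k

lemma indepWeight_add_one (n : ℤ) (k : ℕ) :
    indepWeight (n + 1) k = (RatFunc.X - 1) * indepWeight n k := by
  rw [indepWeight, indepWeight, add_sub_right_comm, zpow_add_one₀ RatFunc.X_sub_one_ne_zero]
  ring

lemma indepWeight_add_two_succ (n : ℤ) (k : ℕ) :
    indepWeight (n + 2) (k + 1) = RatFunc.X * indepWeight n k := by
  rw [indepWeight, indepWeight, pow_succ]
  push_cast
  ring_nf

lemma card_setOf_ne_add_one {V : Type*} [Fintype V] (v : V) [Fintype {x : V | x ≠ v}] :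
    Fintype.card {x : V | x ≠ v} + 1 = Fintype.card V := by
  rw [Set.card_ne_eq, Nat.sub_add_cancel (Fintype.card_pos_iff.2 ⟨v⟩)]

lemma card_setOf_ne_and_ne_add_two {V : Type*} [Fintype V] {v u : V} (hvu : v ≠ u)
    [Fintype {x : V | x ≠ v ∧ x ≠ u}] :
    Fintype.card {x : V | x ≠ v ∧ x ≠ u} + 2 = Fintype.card V := by
  rw [← Set.toFinset_card, ← card_compl_add_card {v, u}, card_pair hvu]
  congr 2
  ext x
  simp

namespace SimpleGraph

variable {V : Type*} (G : SimpleGraph V)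

lemma forall_mem_not_adj_iff_isIndepSet {s : Finset V} :
    (∀ i ∈ s, ∀ j ∈ s, ¬ G.Adj i j) ↔ G.IsIndepSet (s : Set V) :=
  ⟨fun h _ hi _ hj _ => h _ hi _ hj, fun h _ hi _ hj hij => h hi hj (G.ne_of_adj hij) hij⟩

lemma isIndepSet_induce_iff {p : Set V} {t : Finset p} :
    (G.induce p).IsIndepSet (t : Set p) ↔
      G.IsIndepSet (t.map (Function.Embedding.subtype _) : Set V) := by
  rw [coe_map]
  exact Iff.symm <| Subtype.val_injective.injOn.pairwise_image (r := fun v w => ¬ G.Adj v w)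

lemma isIndepSet_insert_of_leaf {v u : V} (hadj : G.Adj v u) (hleaf : ∀ w, G.Adj v w → w = u)
    {s : Set V} : G.IsIndepSet (insert v s) ↔ G.IsIndepSet s ∧ u ∉ s := by
  rw [IsIndepSet, Set.pairwise_insert]
  refine and_congr_right' ⟨fun h hu => (h u hu (G.ne_of_adj hadj)).1 hadj, ?_⟩
  rintro hu w hw -
  exact ⟨fun hvw => hu (hleaf w hvw ▸ hw), fun hwv => hu (hleaf w hwv.symm ▸ hw)⟩

variable [Fintype V]

noncomputable def indepFinsets : Finset (Finset V) := {s | G.IsIndepSet (s : Set V)}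

@[simp] lemma mem_indepFinsets {s : Finset V} :
    s ∈ G.indepFinsets ↔ G.IsIndepSet (s : Set V) := by
  simp [indepFinsets]

lemma indepPoly_eq_sum :
    indepPoly G = ∑ s ∈ G.indepFinsets, indepWeight (Fintype.card V) #s := by
  simp only [indepPoly, indepWeight, indepFinsets, forall_mem_not_adj_iff_isIndepSet]

lemma indepPoly_induce (p : Set V) [Fintype p] :
    indepPoly (G.induce p) =
      ∑ s ∈ G.indepFinsets with ↑s ⊆ p, indepWeight (Fintype.card p) #s := by
  rw [indepPoly_eq_sum]
  refine sum_nbij' (map (Function.Embedding.subtype _)) (Finset.subtype (· ∈ p))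
    ?_ ?_ ?_ ?_ fun t _ => by rw [card_map]
  · intro t ht
    simp only [mem_filter, mem_indepFinsets] at ht ⊢
    exact ⟨G.isIndepSet_induce_iff.1 ht, map_subtype_subset t⟩
  · intro s hs
    simp only [mem_filter, mem_indepFinsets] at hs ⊢
    rw [isIndepSet_induce_iff, subtype_map_of_mem hs.2]
    exact hs.1
  · intro t _
    ext x
    simp
  · intro s hs
    exact subtype_map_of_mem (mem_filter.1 hs).2

lemma sum_indepFinsets_mem_of_leaf {M : Type*} [AddCommMonoid M] (f : Finset V → M) {v u : V}
    (hadj : G.Adj v u) (hleaf : ∀ w, G.Adj v w → w = u) :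
    ∑ s ∈ G.indepFinsets with v ∈ s, f s =
      ∑ t ∈ G.indepFinsets with ↑t ⊆ {x | x ≠ v ∧ x ≠ u}, f (insert v t) := by
  have hinsert (s : Finset V) : G.IsIndepSet ↑(insert v s) ↔ G.IsIndepSet ↑s ∧ u ∉ s := by
    rw [coe_insert, G.isIndepSet_insert_of_leaf hadj hleaf, mem_coe]
  symm
  refine sum_nbij' (insert v) (erase · v) ?_ ?_ ?_ ?_ fun _ _ => rfl
  · intro t ht
    simp only [mem_filter, mem_indepFinsets, Set.subset_def, mem_coe, Set.mem_ofPred_eq] at ht ⊢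
    exact ⟨(hinsert t).2 ⟨ht.1, fun hu => (ht.2 u hu).2 rfl⟩, mem_insert_self v t⟩
  · intro s hs
    simp only [mem_filter, mem_indepFinsets] at hs ⊢
    obtain ⟨hind, hu⟩ := (hinsert (s.erase v)).1 (by rw [insert_erase hs.2]; exact hs.1)
    exact ⟨hind, fun x hx => ⟨ne_of_mem_erase hx, fun hxu => hu (hxu ▸ hx)⟩⟩
  · intro t ht
    exact erase_insert fun hv => ((mem_filter.1 ht).2 hv).1 rfl
  · intro s hs
    exact insert_erase (mem_filter.1 hs).2

end SimpleGraph

theorem indepPoly_leaf_recurrence {V : Type*} [Fintype V] (G : SimpleGraph V) (v u : V)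
    (hadj : G.Adj v u) (hleaf : ∀ w : V, G.Adj v w → w = u) :
    indepPoly G =
      ((RatFunc.X : RatFunc ℚ) - 1) * indepPoly (G.induce {x : V | x ≠ v}) +
        (RatFunc.X : RatFunc ℚ) * indepPoly (G.induce {x : V | x ≠ v ∧ x ≠ u}) := by
  have avoiding_v : ∑ s ∈ G.indepFinsets with v ∉ s, indepWeight (Fintype.card V) #s =
      (RatFunc.X - 1) * indepPoly (G.induce {x : V | x ≠ v}) := by
    rw [G.indepPoly_induce, mul_sum, ← card_setOf_ne_add_one v]
    refine sum_congr (filter_congr fun s _ => ?_) fun s _ => ?_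
    · simp [Set.subset_def]
    · push_cast
      exact indepWeight_add_one _ _
  have containing_v : ∑ s ∈ G.indepFinsets with v ∈ s, indepWeight (Fintype.card V) #s =
      RatFunc.X * indepPoly (G.induce {x : V | x ≠ v ∧ x ≠ u}) := by
    rw [G.sum_indepFinsets_mem_of_leaf _ hadj hleaf, G.indepPoly_induce, mul_sum,
      ← card_setOf_ne_and_ne_add_two (G.ne_of_adj hadj)]
    refine sum_congr rfl fun t ht => ?_
    have hv : v ∉ t := fun hv => ((mem_filter.1 ht).2 hv).1 rfl
    rw [card_insert_of_notMem hv, Nat.cast_add, Nat.cast_two, indepWeight_add_two_succ]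
  rw [G.indepPoly_eq_sum, ← sum_filter_not_add_sum_filter _ (v ∈ ·), avoiding_v, containing_v]
end
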